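/- arXiv:1502.02173 — 2 statements merged into one kernel-verified Lean document; each statement's English description precedes it below -/
import Mathlib

section
/- For the subspace E_ℝ = {az² + bwz + cw² : a, b, c ∈ ℝ} of 2-homogeneous polynomials on ℂ², the supremum of (|a|^{4/3} + |b|^{4/3} + |c|^{4/3})^{3/4} over all (a,b,c) ∈ ℝ³ with sup_{|z|,|w|≤1} |az² + bwz + cw²| ≤ 1 equals (3/2)^{1/4}. -/
/-!
On `|z| = 1`, `w = 1` one has `|a z² + b z + c| = |a z + b + c z̄|`, so with `x = Re z` the
hypothesis gives `b² + (a - c)² + 2 b (a + c) x + 4 a c x² ≤ 1` on `[-1, 1]`. Normalising signs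
so that `|c| ≤ a` and `0 ≤ b`, either `c ≥ 0` and `a + b + c ≤ 1`, or `c = -g < 0` and the
quadratic is concave in `x`. Depending on where its vertex lies, the constraints at `0`, `1` and
at the vertex give `2a² + b² + 2g² ≤ 1` or `(a² + b² + g²)(a + b + g)² ≤ 3/2`, and a Hölder
inequality turns either into `(a^{4/3} + b^{4/3} + g^{4/3})³ ≤ 3/2`. Equality holds for
`(√3/6, √6/3, -√3/6)`, whose polynomial satisfies
`|P(z, w)|² = (|z|² + |w|²)²/4 - (|z|² - |w|² - √2 Re(z w̄))²/6 ≤ 1`.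
-/

/-- Supremum of `|a z² + b z w + c w²|` over the closed unit bidisk. -/
noncomputable def supBidisk (a b c : ℂ) : ℝ :=
  sSup {r : ℝ | ∃ z w : ℂ, ‖z‖ ≤ 1 ∧ ‖w‖ ≤ 1 ∧
    r = ‖a * z^2 + b * z * w + c * w^2‖}

open Set Real

theorem bddAbove_bidisk (a b c : ℂ) :
    BddAbove {r : ℝ | ∃ z w : ℂ, ‖z‖ ≤ 1 ∧ ‖w‖ ≤ 1 ∧ r = ‖a * z^2 + b * z * w + c * w^2‖} := by
  refine ⟨‖a‖ + ‖b‖ + ‖c‖, ?_⟩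
  rintro r ⟨z, w, hz, hw, rfl⟩
  have hz2 : ‖z‖ ^ 2 ≤ 1 := pow_le_one₀ (norm_nonneg z) hz
  have hzw : ‖z‖ * ‖w‖ ≤ 1 := mul_le_one₀ hz (norm_nonneg w) hw
  have hw2 : ‖w‖ ^ 2 ≤ 1 := pow_le_one₀ (norm_nonneg w) hw
  calc ‖a * z ^ 2 + b * z * w + c * w ^ 2‖ ≤ ‖a * z ^ 2‖ + ‖b * z * w‖ + ‖c * w ^ 2‖ :=
        norm_add₃_le
    _ = ‖a‖ * ‖z‖ ^ 2 + ‖b‖ * (‖z‖ * ‖w‖) + ‖c‖ * ‖w‖ ^ 2 := by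
        simp only [norm_mul, norm_pow, mul_assoc]
    _ ≤ ‖a‖ + ‖b‖ + ‖c‖ := by
        gcongr <;> apply mul_le_of_le_one_right (norm_nonneg _) <;> assumption

theorem norm_le_of_supBidisk_le {a b c : ℂ} {M : ℝ} (h : supBidisk a b c ≤ M) {z w : ℂ}
    (hz : ‖z‖ ≤ 1) (hw : ‖w‖ ≤ 1) : ‖a * z ^ 2 + b * z * w + c * w ^ 2‖ ≤ M :=
  (le_csSup (bddAbove_bidisk a b c) ⟨z, w, hz, hw, rfl⟩).trans h

theorem supBidisk_le {a b c : ℂ} {M : ℝ} (hM : 0 ≤ M)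
    (h : ∀ z w : ℂ, ‖z‖ ≤ 1 → ‖w‖ ≤ 1 → ‖a * z ^ 2 + b * z * w + c * w ^ 2‖ ≤ M) :
    supBidisk a b c ≤ M := by
  refine Real.sSup_le ?_ hM
  rintro r ⟨z, w, hz, hw, rfl⟩
  exact h z w hz hw

theorem quadratic_le_of_supBidisk_le_one {a b c : ℝ} (h : supBidisk a b c ≤ 1) {x : ℝ}
    (hx : x ∈ Icc (-1 : ℝ) 1) :
    b ^ 2 + (a - c) ^ 2 + 2 * b * (a + c) * x + 4 * a * c * x ^ 2 ≤ 1 := by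
  set s := √(1 - x ^ 2)
  have hs : s ^ 2 = 1 - x ^ 2 := sq_sqrt (by nlinarith [hx.1, hx.2])
  have hz : ‖(⟨x, s⟩ : ℂ)‖ ≤ 1 := by
    rw [← sq_le_one_iff₀ (norm_nonneg _), Complex.sq_norm, Complex.normSq_mk]
    nlinarith
  have hP := norm_le_of_supBidisk_le h hz (norm_one (α := ℂ)).le
  rw [← sq_le_one_iff₀ (norm_nonneg _), Complex.sq_norm, Complex.normSq_apply] at hP
  simp only [pow_two, mul_one, Complex.add_re, Complex.mul_re, Complex.ofReal_re,
    Complex.ofReal_im, Complex.mul_im, zero_mul, sub_zero, Complex.add_im, add_zero] at hP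
  linear_combination hP + (2 * a * (a * x ^ 2 + b * x + c) - (2 * a * x + b) ^ 2
    - a ^ 2 * (s ^ 2 + 1 - x ^ 2)) * hs

theorem three_mul_mul_sq_le_cube_add {p q : ℝ} (hp : 0 ≤ p) (hq : 0 ≤ q) :
    3 * p * q ^ 2 ≤ p ^ 3 + 2 * q ^ 3 := by
  nlinarith [mul_nonneg (sq_nonneg (p - q)) (by positivity : 0 ≤ p + 2 * q)]

theorem three_mul_rpow_four_thirds_le_sq {x t u : ℝ} (hx : 0 ≤ x) (ht : 0 ≤ t) (hu : 0 ≤ u) :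
    3 * t * u ^ 2 * x ^ (4 / 3 : ℝ) ≤ t ^ 3 + 2 * u ^ 3 * x ^ 2 := by
  have h := three_mul_mul_sq_le_cube_add ht (mul_nonneg hu (rpow_nonneg hx (2 / 3)))
  rw [mul_pow, mul_pow, ← rpow_mul_natCast hx, ← rpow_mul_natCast hx] at h
  norm_num at h
  linarith

theorem three_mul_rpow_four_thirds_le_sq_add_self {x s u : ℝ} (hx : 0 ≤ x) (hs : 0 ≤ s)
    (hu : 0 ≤ u) : 3 * s * u ^ 2 * x ^ (4 / 3 : ℝ) ≤ s ^ 3 * x ^ 2 + 2 * u ^ 3 * x := by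
  have h := mul_le_mul_of_nonneg_left
    (three_mul_mul_sq_le_cube_add (mul_nonneg hs (rpow_nonneg hx (1 / 3))) hu) hx
  have e : x ^ (4 / 3 : ℝ) = x * x ^ (1 / 3 : ℝ) := by
    rw [← rpow_one_add' hx (by norm_num)]; norm_num
  rw [mul_pow, ← rpow_mul_natCast hx] at h
  norm_num at h
  rw [e]; linarith

section Holder

variable {a b g : ℝ}

theorem rpow_four_thirds_sum_pow_three_le_weighted (ha : 0 ≤ a) (hb : 0 ≤ b) (hg : 0 ≤ g) :
    (a ^ (4 / 3 : ℝ) + b ^ (4 / 3 : ℝ) + g ^ (4 / 3 : ℝ)) ^ 3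
      ≤ 3 / 2 * (2 * a ^ 2 + b ^ 2 + 2 * g ^ 2) ^ 2 := by
  set S := a ^ (4 / 3 : ℝ) + b ^ (4 / 3 : ℝ) + g ^ (4 / 3 : ℝ)
  set W := 2 * a ^ 2 + b ^ 2 + 2 * g ^ 2
  rcases (by positivity : 0 ≤ W).eq_or_lt with hW | hW
  · obtain ⟨rfl, rfl, rfl⟩ : a = 0 ∧ b = 0 ∧ g = 0 := by
      refine ⟨?_, ?_, ?_⟩ <;> nlinarith [sq_nonneg a, sq_nonneg b, sq_nonneg g]
    norm_num [S]
  have hS : 0 ≤ S := by positivity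
  -- Young parameters in the ratio `W : S`, as in the equality case of Hölder's inequality
  have ya := three_mul_rpow_four_thirds_le_sq ha hW.le (by positivity : 0 ≤ 2 * S)
  have yb := three_mul_rpow_four_thirds_le_sq hb hW.le hS
  have yg := three_mul_rpow_four_thirds_le_sq hg hW.le (by positivity : 0 ≤ 2 * S)
  have : W * S ^ 3 ≤ W * (3 / 2 * W ^ 2) := by nlinarith
  exact le_of_mul_le_mul_left this hW

theorem rpow_four_thirds_sum_pow_three_le_holder (ha : 0 ≤ a) (hb : 0 ≤ b) (hg : 0 ≤ g) :
    (a ^ (4 / 3 : ℝ) + b ^ (4 / 3 : ℝ) + g ^ (4 / 3 : ℝ)) ^ 3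
      ≤ (a ^ 2 + b ^ 2 + g ^ 2) * (a + b + g) ^ 2 := by
  set S := a ^ (4 / 3 : ℝ) + b ^ (4 / 3 : ℝ) + g ^ (4 / 3 : ℝ)
  set σ := a + b + g
  rcases (by positivity : 0 ≤ σ).eq_or_lt with hσ | hσ
  · obtain ⟨rfl, rfl, rfl⟩ : a = 0 ∧ b = 0 ∧ g = 0 := by
      refine ⟨?_, ?_, ?_⟩ <;> linarith
    norm_num [S]
  have hS : 0 ≤ S := by positivity
  -- Young parameters in the ratio `σ : S`, as in the equality case of Hölder's inequality
  have ya := three_mul_rpow_four_thirds_le_sq_add_self ha hσ.le hS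
  have yb := three_mul_rpow_four_thirds_le_sq_add_self hb hσ.le hS
  have yg := three_mul_rpow_four_thirds_le_sq_add_self hg hσ.le hS
  have : σ * S ^ 3 ≤ σ * ((a ^ 2 + b ^ 2 + g ^ 2) * σ ^ 2) := by nlinarith
  exact le_of_mul_le_mul_left this hσ

end Holder

section MixedSigns

/- For `Q(x) = b² + (a + g)² + 2 b (a - g) x - 4 a g x²` the vertex is `x₀ = b (a - g) / (4 a g)`
with `Q(x₀) = b² + (a + g)² + b² (a - g)² / (4 a g)`; the hypotheses `hv` below say `Q(x₀) ≤ 1`,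
resp. `1 ≤ x₀`. -/

variable {a b g : ℝ}

theorem weighted_sq_sum_le_one_of_vertex (hag : 0 < a * g) (hb : 4 * a * g ≤ b ^ 2)
    (hv : b ^ 2 * (a - g) ^ 2 ≤ 4 * a * g * (1 - b ^ 2 - (a + g) ^ 2)) :
    2 * a ^ 2 + b ^ 2 + 2 * g ^ 2 ≤ 1 := by
  nlinarith [mul_le_mul_of_nonneg_right hb (sq_nonneg (a - g))]

theorem sum_sq_mul_sq_sum_le_of_vertex (h0 : b ^ 2 + (a + g) ^ 2 ≤ 1) (hb : b ^ 2 ≤ 4 * a * g)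
    (hv : b ^ 2 * (a - g) ^ 2 ≤ 4 * a * g * (1 - b ^ 2 - (a + g) ^ 2)) :
    (a ^ 2 + b ^ 2 + g ^ 2) * (a + b + g) ^ 2 ≤ 3 / 2 := by
  nlinarith [sq_nonneg (a + g - b), sq_nonneg (a + g + b - 1),
    sq_nonneg ((a + g) ^ 2 + b ^ 2 - 1), sq_nonneg (a + g - 2 * b)]

theorem sum_sq_mul_sq_sum_le_of_one_le_vertex (hb : 0 ≤ b) (hg : 0 ≤ g) (hga : g ≤ a)
    (h0 : b ^ 2 + (a + g) ^ 2 ≤ 1) (h1 : b + a - g ≤ 1) (hv : 4 * a * g ≤ b * (a - g)) :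
    (a ^ 2 + b ^ 2 + g ^ 2) * (a + b + g) ^ 2 ≤ 3 / 2 := by
  have hsd : (a + g) ^ 2 ≤ a - g := by nlinarith [mul_nonneg (sub_nonneg.2 hga) hb]
  have key : ∀ s d : ℝ, 0 ≤ s → s ^ 2 ≤ d → d ≤ 1 →
      (1 - s ^ 2 / 2 + d ^ 2 / 2) * (1 + s - d) ^ 2 ≤ 3 / 2 := by
    intro s d hs hsd hd
    nlinarith [sq_nonneg (s - d), sq_nonneg (1 - d), sq_nonneg (s * d), sq_nonneg (s - 1 / 2),
      mul_nonneg hs (sq_nonneg (1 - d)), sq_nonneg (d - s ^ 2),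
      mul_nonneg (sub_nonneg.2 hsd) (sub_nonneg.2 hd), sq_nonneg (1 + s - d)]
  have hsq : a ^ 2 + b ^ 2 + g ^ 2 ≤ 1 - (a + g) ^ 2 / 2 + (a - g) ^ 2 / 2 := by nlinarith
  have hsum : (a + b + g) ^ 2 ≤ (1 + (a + g) - (a - g)) ^ 2 := by gcongr <;> linarith
  calc (a ^ 2 + b ^ 2 + g ^ 2) * (a + b + g) ^ 2
      ≤ (1 - (a + g) ^ 2 / 2 + (a - g) ^ 2 / 2) * (1 + (a + g) - (a - g)) ^ 2 := by
        gcongr; nlinarith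
    _ ≤ 3 / 2 := key _ _ (by linarith) hsd (by linarith)

theorem rpow_four_thirds_sum_pow_three_le_of_mixed (hg : 0 < g) (hga : g ≤ a) (hb : 0 ≤ b)
    (hQ : ∀ x ∈ Icc (0 : ℝ) 1,
      b ^ 2 + (a + g) ^ 2 + 2 * b * (a - g) * x - 4 * a * g * x ^ 2 ≤ 1) :
    (a ^ (4 / 3 : ℝ) + b ^ (4 / 3 : ℝ) + g ^ (4 / 3 : ℝ)) ^ 3 ≤ 3 / 2 := by
  have ha : 0 ≤ a := hg.le.trans hga
  have hag : 0 < 4 * a * g := by nlinarith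
  have h0 : b ^ 2 + (a + g) ^ 2 ≤ 1 := by simpa using hQ 0 (by simp)
  have h1 : b + a - g ≤ 1 := by nlinarith [hQ 1 (by simp), sq_nonneg (b + a - g + 1)]
  have holder := rpow_four_thirds_sum_pow_three_le_holder ha hb hg.le
  rcases le_or_gt (b * (a - g)) (4 * a * g) with hv | hv
  · have hv' : b ^ 2 * (a - g) ^ 2 ≤ 4 * a * g * (1 - b ^ 2 - (a + g) ^ 2) := by
      have hx := hQ (b * (a - g) / (4 * a * g))
        ⟨by have := mul_nonneg hb (sub_nonneg.2 hga); positivity, (div_le_one hag).2 hv⟩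
      have e : 2 * b * (a - g) * (b * (a - g) / (4 * a * g))
          - 4 * a * g * (b * (a - g) / (4 * a * g)) ^ 2 = b ^ 2 * (a - g) ^ 2 / (4 * a * g) := by
        field_simp; ring
      rw [add_sub_assoc, e, ← le_sub_iff_add_le', div_le_iff₀' hag] at hx
      linarith
    rcases le_total (b ^ 2) (4 * a * g) with hb4 | hb4
    · exact holder.trans (sum_sq_mul_sq_sum_le_of_vertex h0 hb4 hv')
    · have hW := weighted_sq_sum_le_one_of_vertex (by linarith) hb4 hv'
      refine (rpow_four_thirds_sum_pow_three_le_weighted ha hb hg.le).trans ?_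
      nlinarith [sq_nonneg b]
  · exact holder.trans (sum_sq_mul_sq_sum_le_of_one_le_vertex hb hg.le hga h0 h1 hv.le)

end MixedSigns

theorem rpow_four_thirds_sum_pow_three_le {a b c : ℝ}
    (h : ∀ x ∈ Icc (-1 : ℝ) 1, b ^ 2 + (a - c) ^ 2 + 2 * b * (a + c) * x + 4 * a * c * x ^ 2 ≤ 1) :
    (|a| ^ (4 / 3 : ℝ) + |b| ^ (4 / 3 : ℝ) + |c| ^ (4 / 3 : ℝ)) ^ 3 ≤ 3 / 2 := by
  wlog hca : |c| ≤ |a| generalizing a c with H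
  · have := H (a := c) (c := a) (fun x hx => by linarith [h x hx]) (le_of_not_ge hca)
    linarith
  wlog ha : 0 ≤ a generalizing a b c with H
  · simpa using H (a := -a) (b := -b) (c := -c) (fun x hx => by linarith [h x hx])
      (by simpa using hca) (by linarith)
  wlog hb : 0 ≤ b generalizing b with H
  · simpa using H (b := -b)
      (fun x hx => by linarith [h (-x) ⟨by linarith [hx.2], by linarith [hx.1]⟩]) (by linarith)
  rw [abs_of_nonneg ha, abs_of_nonneg hb] at *
  rcases le_or_gt 0 c with hc | hc
  · rw [abs_of_nonneg hc]
    have hsum : a + b + c ≤ 1 := by nlinarith [h 1 (by simp)]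
    have hS : a ^ (4 / 3 : ℝ) + b ^ (4 / 3 : ℝ) + c ^ (4 / 3 : ℝ) ≤ 1 := by
      have := rpow_le_self_of_le_one ha (by linarith) (by norm_num : (1 : ℝ) ≤ 4 / 3)
      have := rpow_le_self_of_le_one hb (by linarith) (by norm_num : (1 : ℝ) ≤ 4 / 3)
      have := rpow_le_self_of_le_one hc (by linarith) (by norm_num : (1 : ℝ) ≤ 4 / 3)
      linarith
    calc _ ≤ (1 : ℝ) ^ 3 := by gcongr
      _ ≤ 3 / 2 := by norm_num
  · rw [abs_of_neg hc] at *
    exact rpow_four_thirds_sum_pow_three_le_of_mixed (neg_pos.2 hc) hca hb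
      (fun x hx => by linarith [h x ⟨by linarith [hx.1], hx.2⟩])

theorem norm_extremal_le_one {t s : ℝ} (ht : t ^ 2 = 1 / 12) (hs : s ^ 2 = 2 / 3) {z w : ℂ}
    (hz : ‖z‖ ≤ 1) (hw : ‖w‖ ≤ 1) :
    ‖(t : ℂ) * z ^ 2 + (s : ℂ) * z * w + ((-t : ℝ) : ℂ) * w ^ 2‖ ≤ 1 := by
  have key : ‖(t : ℂ) * z ^ 2 + (s : ℂ) * z * w + ((-t : ℝ) : ℂ) * w ^ 2‖ ^ 2
      = (‖z‖ ^ 2 + ‖w‖ ^ 2) ^ 2 / 4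
        - (‖z‖ ^ 2 - ‖w‖ ^ 2 - 6 * t * s * (z.re * w.re + z.im * w.im)) ^ 2 / 6 := by
    obtain ⟨x, y⟩ := z
    obtain ⟨u, v⟩ := w
    rw [Complex.sq_norm, Complex.sq_norm, Complex.sq_norm]
    simp only [Complex.normSq_apply, pow_two, Complex.add_re, Complex.add_im,
      Complex.mul_re, Complex.mul_im, Complex.ofReal_re, Complex.ofReal_im]
    linear_combination ((x ^ 2 - y ^ 2 - u ^ 2 + v ^ 2) ^ 2 + (2 * x * y - 2 * u * v) ^ 2
        + 6 * s ^ 2 * (x * u + y * v) ^ 2) * ht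
      + ((x ^ 2 + y ^ 2) * (u ^ 2 + v ^ 2) + (x * u + y * v) ^ 2 / 2) * hs
  have hz2 := pow_le_one₀ (n := 2) (norm_nonneg z) hz
  have hw2 := pow_le_one₀ (n := 2) (norm_nonneg w) hw
  rw [← sq_le_one_iff₀ (norm_nonneg _), key]
  nlinarith [sq_nonneg (‖z‖ ^ 2 - ‖w‖ ^ 2 - 6 * t * s * (z.re * w.re + z.im * w.im)),
    sq_nonneg (‖z‖), sq_nonneg (‖w‖)]

theorem abs_rpow_four_thirds (x : ℝ) : |x| ^ (4 / 3 : ℝ) = (x ^ 2) ^ (2 / 3 : ℝ) := by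
  rw [← sq_abs, ← rpow_natCast, ← rpow_mul (abs_nonneg x)]; norm_num

theorem extremal_rpow_sum_pow_three :
    (|√3 / 6| ^ (4 / 3 : ℝ) + |√6 / 3| ^ (4 / 3 : ℝ) + |-(√3 / 6)| ^ (4 / 3 : ℝ)) ^ 3
      = 3 / 2 := by
  have h8 : (8 : ℝ) ^ (2 / 3 : ℝ) = 4 := by
    rw [show (8 : ℝ) = 2 ^ (3 : ℝ) by norm_num, ← rpow_mul (by norm_num)]; norm_num
  have hq : ((2 / 3 : ℝ) ^ (2 / 3 : ℝ)) ^ 3 = (2 / 3) ^ 2 := by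
    rw [← rpow_mul_natCast (by norm_num)]; norm_num
  simp only [abs_rpow_four_thirds, neg_sq, div_pow, sq_sqrt (by norm_num : (0 : ℝ) ≤ 3),
    sq_sqrt (by norm_num : (0 : ℝ) ≤ 6)]
  rw [show (3 : ℝ) / 6 ^ 2 = 2 / 3 / 8 by norm_num, show (6 : ℝ) / 3 ^ 2 = 2 / 3 by norm_num,
    div_rpow (by norm_num) (by norm_num), h8]
  linear_combination (27 / 8 : ℝ) * hq

theorem rpow_three_quarters_eq {x : ℝ} (hx : 0 ≤ x) : x ^ (3 / 4 : ℝ) = (x ^ 3) ^ (1 / 4 : ℝ) := by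
  rw [← rpow_natCast_mul hx]; norm_num

theorem stmt3 :
    sSup {r : ℝ | ∃ a b c : ℝ, supBidisk (a : ℂ) (b : ℂ) (c : ℂ) ≤ 1 ∧
        r = (|a| ^ ((4:ℝ)/3) + |b| ^ ((4:ℝ)/3) + |c| ^ ((4:ℝ)/3)) ^ ((3:ℝ)/4)}
      = ((3:ℝ)/2) ^ ((1:ℝ)/4) := by
  refine IsGreatest.csSup_eq ⟨⟨√3 / 6, √6 / 3, -(√3 / 6), ?_, ?_⟩, ?_⟩
  · refine supBidisk_le zero_le_one fun z w hz hw => norm_extremal_le_one ?_ ?_ hz hw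
    · rw [div_pow, sq_sqrt (by norm_num)]; norm_num
    · rw [div_pow, sq_sqrt (by norm_num)]; norm_num
  · rw [rpow_three_quarters_eq (by positivity), extremal_rpow_sum_pow_three]
  · rintro r ⟨a, b, c, h, rfl⟩
    rw [rpow_three_quarters_eq (by positivity)]
    exact rpow_le_rpow (by positivity)
      (rpow_four_thirds_sum_pow_three_le fun x hx => quadratic_le_of_supBidisk_le_one h hx)
      (by norm_num)
end

section
/- The supremum over a, b ∈ ℝ (not both zero) of (2|a|^{3/2} + 2|b|^{3/2})^{2/3} / ‖ax³ + bx²y + bxy² + ay³‖, where ‖·‖ is the sup norm on [−1,1]², equals (2 + 2|b₁|^{3/2})^{2/3}/(2|1 + b₁|) with b₁ = (3/7)(3 − 2·9^{1/3}/(−12+7√3)^{1/3} + 2(−36+21√3)^{1/3}), and this value lies in (2.55, 2.56). -/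
/-- Supremum of `|a x³ + b x² y + b x y² + a y³|` over the unit square `[-1,1]²`. -/
noncomputable def supCubic (a b : ℝ) : ℝ :=
  sSup {r : ℝ | ∃ x y : ℝ, |x| ≤ 1 ∧ |y| ≤ 1 ∧
    r = |a * x^3 + b * x^2 * y + b * x * y^2 + a * y^3|}

noncomputable def b₁ : ℝ :=
  (3/7) * (3 - 2 * (9:ℝ) ^ ((1:ℝ)/3) / (-12 + 7 * Real.sqrt 3) ^ ((1:ℝ)/3)
      + 2 * (-36 + 21 * Real.sqrt 3) ^ ((1:ℝ)/3))

/-!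
Write `‖(a, b)‖ = (2|a|^{3/2} + 2|b|^{3/2})^{2/3}` (a norm on `ℝ²`) and `P(a, b)` for the sup of
the cubic on the square. The coefficient `b₁` is chosen so that `g(t) = t³ + b₁t² + b₁t + 1` has
equal extremes `|g(1)| = |g(t₁)| = -2 - 2b₁` on `[-1, 1]`, at an interior critical point `t₁`; by
homogeneity this gives `P(1, b₁) = 2|1 + b₁|`. For the upper bound, the evaluations `ℓ₁, ℓ₂` at
`(1, 1)` and `(1, t₁)` satisfy `P ≥ max(|ℓ₁|, |ℓ₂|)`. A seminorm is bounded on the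
parallelogram `max(|ℓ₁|, |ℓ₂|) ≤ 1` by its values at two adjacent vertices; one is a multiple of
`(1, b₁)`, and the norm at the other is far smaller, so `‖·‖ ≤ D · max(|ℓ₁|, |ℓ₂|) ≤ D · P`
with `D = ‖(1, b₁)‖ / P(1, b₁)`.
-/

open Real

theorem abs_add_abs_eq_max_abs (x y : ℝ) : |x| + |y| = max |-x + y| |x + y| := by
  grind [abs_cases]

theorem Seminorm.le_mul_max_abs_of_vertices {E : Type*} [AddCommGroup E] [Module ℝ E]
    (N : Seminorm ℝ E) (ℓ₁ ℓ₂ : E →ₗ[ℝ] ℝ) {v w : E} {C M L : ℝ} (hM : 0 ≤ M) (hL : 0 ≤ L)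
    (hv₁ : ℓ₁ v = -M) (hv₂ : ℓ₂ v = M) (hw₁ : ℓ₁ w = L) (hw₂ : ℓ₂ w = L)
    (hNv : N v ≤ C * M) (hNw : N w ≤ C * L) (hspan : ∀ x, ∃ α β : ℝ, α • v + β • w = x)
    (x : E) : N x ≤ C * max |ℓ₁ x| |ℓ₂ x| := by
  obtain ⟨α, β, rfl⟩ := hspan x
  have hmax : max |ℓ₁ (α • v + β • w)| |ℓ₂ (α • v + β • w)| = |α| * M + |β| * L := by
    simp only [map_add, map_smul, smul_eq_mul, hv₁, hv₂, hw₁, hw₂, mul_neg]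
    rw [← abs_of_nonneg hM, ← abs_of_nonneg hL, ← abs_mul, ← abs_mul, abs_add_abs_eq_max_abs,
      abs_of_nonneg hM, abs_of_nonneg hL]
  calc N (α • v + β • w) ≤ |α| * N v + |β| * N w := by
        simpa only [map_smul_eq_mul, Real.norm_eq_abs] using map_add_le_add N (α • v) (β • w)
    _ ≤ |α| * (C * M) + |β| * (C * L) := by gcongr
    _ = C * max |ℓ₁ (α • v + β • w)| |ℓ₂ (α • v + β • w)| := by rw [hmax]; ring

theorem Prod.exists_smul_add_smul_eq {K : Type*} [Field K] {v w : K × K}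
    (h : v.1 * w.2 - v.2 * w.1 ≠ 0) (x : K × K) : ∃ α β : K, α • v + β • w = x := by
  refine ⟨(x.1 * w.2 - x.2 * w.1) / (v.1 * w.2 - v.2 * w.1),
    (v.1 * x.2 - v.2 * x.1) / (v.1 * w.2 - v.2 * w.1), ?_⟩
  ext <;> simp only [Prod.fst_add, Prod.snd_add, Prod.smul_fst, Prod.smul_snd, smul_eq_mul] <;>
    rw [div_mul_eq_mul_div, div_mul_eq_mul_div, ← add_div, div_eq_iff h] <;> ring

theorem rpow_natCast_div_le_iff {x y : ℝ} (hx : 0 ≤ x) (hy : 0 ≤ y) {m n : ℕ} (hn : n ≠ 0) :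
    x ^ ((m : ℝ) / n) ≤ y ↔ x ^ m ≤ y ^ n := by
  rw [← pow_le_pow_iff_left₀ (rpow_nonneg hx _) hy hn, ← rpow_natCast (x ^ _), ← rpow_mul hx,
    div_mul_cancel₀ _ (by positivity), rpow_natCast]

theorem le_rpow_natCast_div_iff {x y : ℝ} (hx : 0 ≤ x) (hy : 0 ≤ y) {m n : ℕ} (hn : n ≠ 0) :
    y ≤ x ^ ((m : ℝ) / n) ↔ y ^ n ≤ x ^ m := by
  rw [← pow_le_pow_iff_left₀ hy (rpow_nonneg hx _) hn, ← rpow_natCast (x ^ _), ← rpow_mul hx,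
    div_mul_cancel₀ _ (by positivity), rpow_natCast]

noncomputable def evalCubic (x y : ℝ) : ℝ × ℝ →ₗ[ℝ] ℝ where
  toFun c := c.1 * x^3 + c.2 * x^2 * y + c.2 * x * y^2 + c.1 * y^3
  map_add' c d := by simp only [Prod.fst_add, Prod.snd_add]; ring
  map_smul' r c := by simp only [Prod.smul_fst, Prod.smul_snd, smul_eq_mul, RingHom.id_apply]; ring

@[simp]
theorem evalCubic_apply (x y a b : ℝ) :
    evalCubic x y (a, b) = a * x^3 + b * x^2 * y + b * x * y^2 + a * y^3 := rfl

theorem evalCubic_comm (x y : ℝ) (c : ℝ × ℝ) : evalCubic x y c = evalCubic y x c := by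
  simp only [evalCubic, LinearMap.coe_mk, AddHom.coe_mk]; ring

theorem evalCubic_eq_pow_mul (x : ℝ) {y : ℝ} (hy : y ≠ 0) (c : ℝ × ℝ) :
    evalCubic x y c = y ^ 3 * evalCubic (x / y) 1 c := by
  simp only [evalCubic, LinearMap.coe_mk, AddHom.coe_mk]; field_simp

theorem bddAbove_supCubic_set (a b : ℝ) : BddAbove {r : ℝ | ∃ x y : ℝ, |x| ≤ 1 ∧ |y| ≤ 1 ∧
    r = |a * x^3 + b * x^2 * y + b * x * y^2 + a * y^3|} := by
  refine ⟨|a| + |b| + |b| + |a|, ?_⟩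
  rintro _ ⟨x, y, hx, hy, rfl⟩
  have hx' := abs_nonneg x
  have hy' := abs_nonneg y
  have h₁ : |x| ^ 3 ≤ 1 := pow_le_one₀ hx' hx
  have h₂ : |x| ^ 2 * |y| ≤ 1 := mul_le_one₀ (pow_le_one₀ hx' hx) hy' hy
  have h₃ : |x| * |y| ^ 2 ≤ 1 := mul_le_one₀ hx (by positivity) (pow_le_one₀ hy' hy)
  have h₄ : |y| ^ 3 ≤ 1 := pow_le_one₀ hy' hy
  calc _ ≤ |a * x^3| + |b * x^2 * y| + |b * x * y^2| + |a * y^3| := by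
        refine (abs_add_le _ _).trans (add_le_add ?_ le_rfl)
        refine (abs_add_le _ _).trans (add_le_add (abs_add_le _ _) le_rfl)
    _ ≤ |a| + |b| + |b| + |a| := by
      simp only [abs_mul, abs_pow]
      nlinarith [mul_le_mul_of_nonneg_left h₁ (abs_nonneg a),
        mul_le_mul_of_nonneg_left h₂ (abs_nonneg b), mul_le_mul_of_nonneg_left h₃ (abs_nonneg b),
        mul_le_mul_of_nonneg_left h₄ (abs_nonneg a)]

theorem le_supCubic (a b : ℝ) {x y : ℝ} (hx : |x| ≤ 1) (hy : |y| ≤ 1) :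
    |evalCubic x y (a, b)| ≤ supCubic a b :=
  le_csSup (bddAbove_supCubic_set a b) ⟨x, y, hx, hy, rfl⟩

theorem supCubic_le {a b K : ℝ} (h : ∀ x y : ℝ, |x| ≤ 1 → |y| ≤ 1 → |evalCubic x y (a, b)| ≤ K) :
    supCubic a b ≤ K :=
  csSup_le ⟨_, 0, 0, by simp, by simp, rfl⟩ (by rintro _ ⟨x, y, hx, hy, rfl⟩; exact h x y hx hy)

theorem abs_evalCubic_le {c : ℝ × ℝ} {K : ℝ} (h : ∀ t : ℝ, |t| ≤ 1 → |evalCubic t 1 c| ≤ K)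
    {x y : ℝ} (hx : |x| ≤ 1) (hy : |y| ≤ 1) : |evalCubic x y c| ≤ K := by
  wlog hxy : |x| ≤ |y| generalizing x y
  · rw [evalCubic_comm]; exact this hy hx (le_of_not_ge hxy)
  rcases eq_or_ne y 0 with rfl | hy0
  · obtain rfl : x = 0 := abs_nonpos_iff.mp (by simpa using hxy)
    have h00 : evalCubic 0 0 c = 0 := by simp [evalCubic]
    simpa [h00] using (abs_nonneg _).trans (h 0 (by simp))
  · rw [evalCubic_eq_pow_mul x hy0 c, abs_mul, ← one_mul K]
    exact mul_le_mul (by rw [abs_pow]; exact pow_le_one₀ (abs_nonneg y) hy)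
      (h _ (by rw [abs_div]; exact div_le_one_of_le₀ hxy (abs_nonneg y))) (abs_nonneg _) zero_le_one

/-- The `ℓ^{3/2}` norm of the coefficient vector `(a, b, b, a)` of `a x³ + b x²y + b xy² + a y³`. -/
noncomputable def coeffNorm : Seminorm ℝ (ℝ × ℝ) :=
  .of (fun c => (2 * |c.1| ^ ((3:ℝ)/2) + 2 * |c.2| ^ ((3:ℝ)/2)) ^ ((2:ℝ)/3))
    (fun c d => by
      have h := Real.Lp_add_le Finset.univ ![c.1, c.2, c.2, c.1] ![d.1, d.2, d.2, d.1]
        (p := 3/2) (by norm_num)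
      simp only [Fin.sum_univ_succ, Fin.sum_univ_zero, Matrix.cons_val_zero, Matrix.cons_val_succ,
        add_zero] at h
      have e (u v : ℝ) : 2 * u + 2 * v = u + (v + (v + u)) := by ring
      simpa only [Prod.fst_add, Prod.snd_add, e, show (1:ℝ) / (3 / 2) = 2 / 3 by norm_num] using h)
    (fun r c => by
      simp only [Prod.smul_fst, Prod.smul_snd, smul_eq_mul, abs_mul, Real.norm_eq_abs,
        mul_rpow (abs_nonneg r) (abs_nonneg _)]
      rw [show ∀ u v w : ℝ, 2 * (u * v) + 2 * (u * w) = u * (2 * v + 2 * w) by intros; ring,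
        mul_rpow (by positivity) (by positivity), ← rpow_mul (abs_nonneg r)]
      norm_num)

theorem coeffNorm_apply (a b : ℝ) :
    coeffNorm (a, b) = (2 * |a| ^ ((3:ℝ)/2) + 2 * |b| ^ ((3:ℝ)/2)) ^ ((2:ℝ)/3) := rfl

theorem b₁_cardano : ∃ w : ℝ, 0 < w ∧ w ^ 3 = -36 + 21 * √3 ∧ b₁ = 3 / 7 * (3 - 6 / w + 2 * w) := by
  have h3 : 0 < -12 + 7 * √3 := by nlinarith [sq_sqrt (show (0:ℝ) ≤ 3 by norm_num), sqrt_nonneg 3]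
  have hX : 0 < (-36 + 21 * √3) ^ ((1:ℝ)/3) := rpow_pos_of_pos (by linarith) _
  have hY : 0 < (-12 + 7 * √3) ^ ((1:ℝ)/3) := rpow_pos_of_pos h3 _
  refine ⟨_, hX, ?_, ?_⟩
  · rw [← rpow_natCast, ← rpow_mul (by linarith)]; norm_num
  · have h9 : (9:ℝ) ^ ((1:ℝ)/3) * (-36 + 21 * √3) ^ ((1:ℝ)/3) = 3 * (-12 + 7 * √3) ^ ((1:ℝ)/3) := by
      rw [← mul_rpow (by norm_num) (by linarith),
        show (9:ℝ) * (-36 + 21 * √3) = 3 ^ (3:ℝ) * (-12 + 7 * √3) by norm_num; ring,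
        mul_rpow (by positivity) h3.le, ← rpow_mul (by norm_num)]
      norm_num
    have h6 : 2 * (9:ℝ) ^ ((1:ℝ)/3) / (-12 + 7 * √3) ^ ((1:ℝ)/3)
        = 6 / (-36 + 21 * √3) ^ ((1:ℝ)/3) := by
      rw [div_eq_div_iff hY.ne' hX.ne']
      linear_combination 2 * h9
    rw [b₁, h6]

theorem b₁_cubic : 7 * b₁ ^ 3 - 27 * b₁ ^ 2 + 81 * b₁ + 243 = 0 := by
  obtain ⟨w, hw, hw3, hb⟩ := b₁_cardano
  have hs : √3 ^ 2 = 3 := sq_sqrt (by norm_num)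
  have hb' : 7 * w * b₁ = 6 * w ^ 2 + 9 * w - 18 := by rw [hb]; field_simp; ring
  have key : (7 * w) ^ 3 * (7 * b₁ ^ 3 - 27 * b₁ ^ 2 + 81 * b₁ + 243) = 0 := by
    have hB : 7 * w * b₁ - (6 * w ^ 2 + 9 * w - 18) = 0 := by linear_combination hb'
    linear_combination (7 * ((7 * w * b₁) ^ 2 + 7 * w * b₁ * (6 * w ^ 2 + 9 * w - 18)
      + (6 * w ^ 2 + 9 * w - 18) ^ 2) - 189 * w * (7 * w * b₁ + (6 * w ^ 2 + 9 * w - 18))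
      + 3969 * w ^ 2) * hb' + (1512 * w ^ 3 + 54432 + 31752 * √3) * hw3 + 666792 * hs
  exact (mul_eq_zero.mp key).resolve_left (by positivity)

theorem b₁_mem_Ioo : b₁ ∈ Set.Ioo (-1.6693) (-1.6692) := by
  have h := b₁_cubic
  constructor
  · by_contra! hb
    nlinarith [mul_nonneg (sub_nonneg.2 hb) (sq_nonneg (b₁ + 1))]
  · by_contra! hb
    nlinarith [mul_nonneg (sub_nonneg.2 hb) (sq_nonneg (b₁ + 1))]

/-- The interior critical point of `t ↦ t³ + b₁t² + b₁t + 1`, where it attains `-(2 + 2b₁)`;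
the cubic equation for `b₁` lets it be written rationally in `b₁`. -/
noncomputable def t₁ : ℝ := (b₁ ^ 2 - 18 * b₁ - 27) / (-2 * b₁ ^ 2 + 6 * b₁)

theorem t₁_denom_neg : -2 * b₁ ^ 2 + 6 * b₁ < 0 := by
  nlinarith [b₁_mem_Ioo.2]

theorem t₁_mul : (-2 * b₁ ^ 2 + 6 * b₁) * t₁ = b₁ ^ 2 - 18 * b₁ - 27 :=
  mul_div_cancel₀ _ t₁_denom_neg.ne

theorem t₁_critical : 3 * t₁ ^ 2 + 2 * b₁ * t₁ + b₁ = 0 := by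
  refine (mul_eq_zero.mp ?_).resolve_left (pow_ne_zero 2 t₁_denom_neg.ne)
  linear_combination (3 * ((-2 * b₁ ^ 2 + 6 * b₁) * t₁) + 3 * (b₁ ^ 2 - 18 * b₁ - 27)
    + 2 * b₁ * (-2 * b₁ ^ 2 + 6 * b₁)) * t₁_mul + (9 * (b₁ + 1)) * b₁_cubic

theorem t₁_value : t₁ ^ 3 + b₁ * t₁ ^ 2 + b₁ * t₁ + 1 = -2 - 2 * b₁ := by
  refine sub_eq_zero.mp ((mul_eq_zero.mp (?_ : _ * _ = (0:ℝ))).resolve_left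
    (pow_ne_zero 3 t₁_denom_neg.ne))
  set A := -2 * b₁ ^ 2 + 6 * b₁
  set B := b₁ ^ 2 - 18 * b₁ - 27
  linear_combination ((A * t₁) ^ 2 + B * (A * t₁) + B ^ 2 + b₁ * A * (A * t₁) + b₁ * A * B
    + b₁ * A ^ 2) * t₁_mul + (-2 * b₁ ^ 4 + 7 * b₁ ^ 3 - 45 * b₁ ^ 2 - 135 * b₁ - 81) * b₁_cubic

theorem t₁_mem_Ioo : t₁ ∈ Set.Ioo (-0.38) (-0.37) := by
  obtain ⟨hb_lo, hb_hi⟩ := b₁_mem_Ioo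
  rw [t₁, Set.mem_Ioo, lt_div_iff_of_neg t₁_denom_neg, div_lt_iff_of_neg t₁_denom_neg]
  constructor <;> nlinarith

theorem two_abs_one_add_b₁ : 2 * |1 + b₁| = -2 - 2 * b₁ := by
  rw [abs_of_neg (by linarith [b₁_mem_Ioo.2])]; ring

theorem abs_evalCubic_one_b₁_le {t : ℝ} (ht : |t| ≤ 1) :
    |evalCubic t 1 (1, b₁)| ≤ 2 * |1 + b₁| := by
  obtain ⟨ht_lo, ht_hi⟩ := abs_le.1 ht
  have hb := b₁_mem_Ioo.2
  have ht₁ := t₁_mem_Ioo.2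
  rw [evalCubic_apply, two_abs_one_add_b₁, abs_le]
  constructor
  · -- `g(t) + M = (1 - t)(-(t² + (b₁ + 1)t + 2b₁ + 1))`; the quadratic is convex, negative at `±1`
    have hq : t ^ 2 + (b₁ + 1) * t + 2 * b₁ + 1 ≤ 0 := by
      nlinarith [mul_nonneg (sub_nonneg.2 ht_lo) (sub_nonneg.2 ht_hi)]
    nlinarith [mul_nonneg (sub_nonneg.2 ht_hi) (neg_nonneg.2 hq)]
  · -- `t₁` is a double root of `M - g`
    have hfac : -2 - 2 * b₁ - (t ^ 3 + b₁ * t ^ 2 + b₁ * t + 1)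
        = (t - t₁) ^ 2 * (-b₁ - 2 * t₁ - t) := by
      linear_combination (-t - b₁ / 3) * t₁_critical + 2 * t₁_value - (1 / 3) * t₁_mul
    nlinarith [mul_nonneg (sq_nonneg (t - t₁)) (by linarith : 0 ≤ -b₁ - 2 * t₁ - t)]

theorem supCubic_one_b₁ : supCubic 1 b₁ = 2 * |1 + b₁| := by
  refine le_antisymm (supCubic_le fun _ _ => abs_evalCubic_le fun _ => abs_evalCubic_one_b₁_le) ?_
  have h11 : evalCubic 1 1 (1, b₁) = 2 * (1 + b₁) := by
    rw [evalCubic_apply]; ring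
  simpa [h11, abs_mul] using le_supCubic 1 b₁ (x := 1) (y := 1) (by simp) (by simp)

noncomputable def bhConst : ℝ := (2 + 2 * |b₁| ^ ((3:ℝ)/2)) ^ ((2:ℝ)/3) / (2 * |1 + b₁|)

theorem coeffNorm_one_b₁ : coeffNorm (1, b₁) = bhConst * (2 * |1 + b₁|) := by
  rw [bhConst, div_mul_cancel₀ _ (by rw [two_abs_one_add_b₁]; linarith [b₁_mem_Ioo.2]),
    coeffNorm_apply, abs_one, one_rpow, mul_one]

theorem bhConst_mem_Ioo : bhConst ∈ Set.Ioo 2.55 2.56 := by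
  obtain ⟨hb_lo, hb_hi⟩ := b₁_mem_Ioo
  have hb3_lo := pow_le_pow_left₀ (by norm_num) (by linarith : (1.6692:ℝ) ≤ -b₁) 3
  have hb3_hi := pow_le_pow_left₀ (by linarith) (by linarith : -b₁ ≤ (1.6693:ℝ)) 3
  have hY : 2.156 ≤ |b₁| ^ ((3:ℝ)/2) ∧ |b₁| ^ ((3:ℝ)/2) ≤ 2.158 := by
    rw [abs_of_neg (by linarith)]
    constructor
    · exact_mod_cast (le_rpow_natCast_div_iff (m := 3) (n := 2) (by linarith) (by norm_num)
        two_ne_zero).2 (by linarith)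
    · exact_mod_cast (rpow_natCast_div_le_iff (m := 3) (n := 2) (by linarith) (by norm_num)
        two_ne_zero).2 (by linarith)
  have hN : 3.414 ≤ (2 + 2 * |b₁| ^ ((3:ℝ)/2)) ^ ((2:ℝ)/3) ∧
      (2 + 2 * |b₁| ^ ((3:ℝ)/2)) ^ ((2:ℝ)/3) ≤ 3.42 := by
    constructor
    · exact_mod_cast (le_rpow_natCast_div_iff (m := 2) (n := 3) (by linarith) (by norm_num)
        three_ne_zero).2 (by nlinarith)
    · exact_mod_cast (rpow_natCast_div_le_iff (m := 2) (n := 3) (by linarith) (by norm_num)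
        three_ne_zero).2 (by nlinarith)
  rw [bhConst, two_abs_one_add_b₁, Set.mem_Ioo, lt_div_iff₀ (by linarith),
    div_lt_iff₀ (by linarith)]
  constructor <;> nlinarith

theorem coeffNorm_le (c : ℝ × ℝ) : coeffNorm c ≤ 1.6 * (|c.1| + |c.2|) := by
  have h2 : (2:ℝ) ^ ((2:ℝ)/3) ≤ 1.6 := by
    exact_mod_cast (rpow_natCast_div_le_iff (m := 2) (n := 3) (by norm_num) (by norm_num)
      three_ne_zero).2 (by norm_num)
  have e₁ : coeffNorm (1, 0) = (2:ℝ) ^ ((2:ℝ)/3) := by simp [coeffNorm_apply]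
  have e₂ : coeffNorm (0, 1) = (2:ℝ) ^ ((2:ℝ)/3) := by simp [coeffNorm_apply]
  have hc : c = c.1 • ((1, 0) : ℝ × ℝ) + c.2 • ((0, 1) : ℝ × ℝ) := by ext <;> simp
  calc coeffNorm c = coeffNorm (c.1 • ((1, 0) : ℝ × ℝ) + c.2 • ((0, 1) : ℝ × ℝ)) := congrArg _ hc
    _ ≤ |c.1| * coeffNorm (1, 0) + |c.2| * coeffNorm (0, 1) := by
        simpa only [map_smul_eq_mul, Real.norm_eq_abs] using
          map_add_le_add coeffNorm (c.1 • ((1, 0) : ℝ × ℝ)) (c.2 • ((0, 1) : ℝ × ℝ))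
    _ ≤ 1.6 * (|c.1| + |c.2|) := by
        rw [e₁, e₂]
        nlinarith [abs_nonneg c.1, abs_nonneg c.2]

theorem coeffNorm_le_bhConst_mul_supCubic (a b : ℝ) :
    coeffNorm (a, b) ≤ bhConst * supCubic a b := by
  obtain ⟨hb_lo, hb_hi⟩ := b₁_mem_Ioo
  obtain ⟨ht_lo, ht_hi⟩ := t₁_mem_Ioo
  obtain ⟨hC, -⟩ := bhConst_mem_Ioo
  have hM := two_abs_one_add_b₁
  obtain ⟨hp_lo, hp_hi, hq_lo, hq_hi⟩ : 0.945 < 1 + t₁ ^ 3 ∧ 1 + t₁ ^ 3 < 1 ∧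
      -0.24 < t₁ + t₁ ^ 2 ∧ t₁ + t₁ ^ 2 < -0.23 := by
    have := mul_pos (by linarith : 0 < t₁ + 0.38) (by linarith : 0 < -0.37 - t₁)
    refine ⟨?_, ?_, ?_, ?_⟩ <;>
      nlinarith [mul_pos (by linarith : (0:ℝ) < -t₁) (by nlinarith : (0:ℝ) < t₁ ^ 2)]
  set p := 1 + t₁ ^ 3
  set q := t₁ + t₁ ^ 2
  -- `(1, b₁)` and `(2 - q, p - 2)` are, up to scaling, adjacent vertices of the parallelogram
  -- `max |ℓ₁| |ℓ₂| ≤ 1`, where `ℓ₁, ℓ₂` evaluate the cubic at `(1, 1)` and `(1, t₁)`.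
  have key := coeffNorm.le_mul_max_abs_of_vertices (evalCubic 1 1) (evalCubic 1 t₁)
    (v := (1, b₁)) (w := (2 - q, p - 2)) (M := 2 * |1 + b₁|) (L := 2 * (p - q)) (C := bhConst)
    (by positivity) (by linarith)
    (by rw [evalCubic_apply, hM]; ring)
    (by rw [evalCubic_apply, hM]; linear_combination t₁_value)
    (by rw [evalCubic_apply]; ring)
    (by rw [evalCubic_apply]; ring)
    coeffNorm_one_b₁.le
    ((coeffNorm_le _).trans (by
      rw [abs_of_pos (by linarith : (0:ℝ) < (2 - q, p - 2).1),
        abs_of_neg (by linarith : (p - 2, 2 - q).1 < 0)]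
      nlinarith))
    (Prod.exists_smul_add_smul_eq (by dsimp only; nlinarith))
    (a, b)
  refine key.trans (mul_le_mul_of_nonneg_left (max_le ?_ ?_) (by linarith))
  · exact le_supCubic a b (by simp) (by simp)
  · exact le_supCubic a b (by simp) (abs_le.2 ⟨by linarith, by linarith⟩)

theorem coeffNorm_pos {a b : ℝ} (hab : ¬(a = 0 ∧ b = 0)) : 0 < coeffNorm (a, b) := by
  rw [coeffNorm_apply]
  apply rpow_pos_of_pos
  rcases not_and_or.mp hab with h | h
  · have := rpow_pos_of_pos (abs_pos.mpr h) ((3:ℝ)/2); positivity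
  · have := rpow_pos_of_pos (abs_pos.mpr h) ((3:ℝ)/2); positivity

theorem stmt12 :
    sSup {r : ℝ | ∃ a b : ℝ, ¬(a = 0 ∧ b = 0) ∧
        r = (2 * |a| ^ ((3:ℝ)/2) + 2 * |b| ^ ((3:ℝ)/2)) ^ ((2:ℝ)/3) / supCubic a b}
      = (2 + 2 * |b₁| ^ ((3:ℝ)/2)) ^ ((2:ℝ)/3) / (2 * |1 + b₁|) ∧
    (2 + 2 * |b₁| ^ ((3:ℝ)/2)) ^ ((2:ℝ)/3) / (2 * |1 + b₁|) ∈ Set.Ioo (2.55 : ℝ) 2.56 := by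
  refine ⟨IsGreatest.csSup_eq ⟨⟨1, b₁, by simp, ?_⟩, ?_⟩, bhConst_mem_Ioo⟩
  · rw [supCubic_one_b₁, abs_one, one_rpow, mul_one]
  · rintro _ ⟨a, b, hab, rfl⟩
    have hle := coeffNorm_le_bhConst_mul_supCubic a b
    have hsup : 0 < supCubic a b :=
      pos_of_mul_pos_right ((coeffNorm_pos hab).trans_le hle) (by linarith [bhConst_mem_Ioo.1])
    exact (div_le_iff₀ hsup).2 hle
end
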